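/- Theorem 1(3): Let t, k ∈ ℝ with t ≠ 0 and k ≠ 0, and set p = b^t, l = c^t. The three points A, M'(k), M(k+t) are not collinear; let O = (x_O, y_O) be their circumcenter, i.e. the unique point equidistant from all three. Then F⁺_{p,l}(x_O, y_O) = 0; i.e. these circumcenters lie on the fixed conic F⁺_{p,l} = 0. -/
import Mathlib
set_option maxHeartbeats 1600000

/-- The conic `F⁺_{p,l}(x,y) = 0` from the paper (the formula of `F⁻` with the roles of
`(p-l)` and `(p+l)` interchanged; `c = |AB|`). -/
noncomputable def Fplus (xA yA c p l x y : ℝ) : ℝ :=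
  4*y^2*yA^2*(p+l)^2 + x*y*yA*(p+l)^2*(8*xA-4)
    + x^2*((p+l)^2*(2*xA-1)^2 - (p-l)^2)
    - 2*y*yA*(2*c^2*(p+l)^2 - (p-l)^2)
    + x*(-(2*c^2*(p+l)^2*(2*xA-1)) + 2*xA*(p-l)^2)
    + c^2*(c^2*(p+l)^2 - (p-l)^2)

/-- Theorem 1(3): for fixed span `t ≠ 0` and `k ≠ 0`, the circumcenter of
`A M'(k) M(k+t)` lies on the conic `F⁺_{b^t, c^t} = 0`, and the three points
are not collinear. -/
theorem statement2 (xA yA : ℝ) (hyA : yA ≠ 0)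
    (b c : ℝ) (hb : b = Real.sqrt ((xA - 1)^2 + yA^2))
    (hc : c = Real.sqrt (xA^2 + yA^2)) (hbc : b ≠ c)
    (t k : ℝ) (ht : t ≠ 0) (hk : k ≠ 0)
    (p l : ℝ) (hp : p = b ^ t) (hl : l = c ^ t)
    (M : ℝ → ℝ × ℝ) (hM : ∀ s : ℝ, M s = (c ^ s / (c ^ s + b ^ s), 0))
    (M' : ℝ → ℝ × ℝ) (hM' : ∀ s : ℝ, M' s = (c ^ s / (c ^ s - b ^ s), 0))
    (O : ℝ × ℝ)
    (hOA : (O.1 - xA)^2 + (O.2 - yA)^2 = (O.1 - (M' k).1)^2 + (O.2 - (M' k).2)^2)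
    (hOM : (O.1 - (M' k).1)^2 + (O.2 - (M' k).2)^2
        = (O.1 - (M (k + t)).1)^2 + (O.2 - (M (k + t)).2)^2) :
    ¬ Collinear ℝ ({(xA, yA), M' k, M (k + t)} : Set (ℝ × ℝ)) ∧
      Fplus xA yA c p l O.1 O.2 = 0 := by
  have hyA2 : 0 < yA ^ 2 := by rcases hyA.lt_or_gt with h | h <;> nlinarith
  have hb0 : 0 < b := by rw [hb]; exact Real.sqrt_pos.mpr (by nlinarith [sq_nonneg (xA - 1)])
  have hc0 : 0 < c := by rw [hc]; exact Real.sqrt_pos.mpr (by nlinarith [sq_nonneg xA])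
  have hc2 : c ^ 2 = xA ^ 2 + yA ^ 2 := by
    rw [hc, Real.sq_sqrt (by positivity)]
  have hB0 : 0 < b ^ k := Real.rpow_pos_of_pos hb0 k
  have hC0 : 0 < c ^ k := Real.rpow_pos_of_pos hc0 k
  have hp0 : 0 < p := hp ▸ Real.rpow_pos_of_pos hb0 t
  have hl0 : 0 < l := hl ▸ Real.rpow_pos_of_pos hc0 t
  have hCBne : c ^ k ≠ b ^ k := by
    intro h
    apply hbc
    have h2 : (b ^ k) ^ (k⁻¹ : ℝ) = (c ^ k) ^ (k⁻¹ : ℝ) := by rw [h]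
    rwa [← Real.rpow_mul hb0.le, ← Real.rpow_mul hc0.le, mul_inv_cancel₀ hk,
      Real.rpow_one, Real.rpow_one] at h2
  have hne : c ^ k - b ^ k ≠ 0 := sub_ne_zero.mpr hCBne
  have hden2 : c ^ k * l + b ^ k * p ≠ 0 := by positivity
  have hck : c ^ (k + t) = c ^ k * l := by rw [Real.rpow_add hc0, hl]
  have hbk : b ^ (k + t) = b ^ k * p := by rw [Real.rpow_add hb0, hp]
  rw [hM' k] at hOA hOM ⊢
  rw [hM (k + t), hck, hbk] at hOM ⊢
  dsimp only at hOA hOM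
  have hm12 : c ^ k / (c ^ k - b ^ k) ≠ c ^ k * l / (c ^ k * l + b ^ k * p) := by
    intro h
    rw [div_eq_div_iff hne hden2] at h
    nlinarith [mul_pos (mul_pos hC0 hB0) hp0, mul_pos (mul_pos hC0 hB0) hl0]
  constructor
  · intro hcol
    rw [collinear_iff_of_mem (Set.mem_insert_of_mem _ (Set.mem_insert _ _))] at hcol
    obtain ⟨v, hv⟩ := hcol
    obtain ⟨rA, hrA⟩ := hv (xA, yA) (Set.mem_insert _ _)
    obtain ⟨r2, hr2⟩ := hv (c ^ k * l / (c ^ k * l + b ^ k * p), 0) (by simp)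
    rw [Prod.ext_iff] at hrA hr2
    simp only [vadd_eq_add, Prod.fst_add, Prod.snd_add, Prod.smul_fst, Prod.smul_snd,
      smul_eq_mul] at hrA hr2
    rcases mul_eq_zero.mp (by linarith [hr2.2] : r2 * v.2 = 0) with h | h
    · rw [h] at hr2
      exact hm12 (by linarith [hr2.1])
    · exact hyA (by rw [hrA.2, h]; ring)
  · obtain ⟨x, hxd⟩ : ∃ x, x = O.1 := ⟨_, rfl⟩
    obtain ⟨y, hyd⟩ : ∃ y, y = O.2 := ⟨_, rfl⟩
    rw [← hxd, ← hyd] at hOA hOM ⊢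
    obtain ⟨m1, hm1d⟩ : ∃ m1, m1 = c ^ k / (c ^ k - b ^ k) := ⟨_, rfl⟩
    obtain ⟨m2, hm2d⟩ : ∃ m2, m2 = c ^ k * l / (c ^ k * l + b ^ k * p) := ⟨_, rfl⟩
    rw [← hm1d] at hOA hOM hm12
    rw [← hm2d] at hOM hm12
    have hR : p * m2 * (m1 - 1) = l * m1 * (1 - m2) := by
      rw [hm1d, hm2d]
      field_simp
      ring
    have hLv : p * m2 + l * m2 - l = l * p * (c ^ k - b ^ k) / (c ^ k * l + b ^ k * p) := by
      rw [hm2d]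
      field_simp
      ring
    have hL : p * m2 + l * m2 - l ≠ 0 := by
      rw [hLv]
      exact div_ne_zero (mul_ne_zero (mul_ne_zero hl0.ne' hp0.ne') hne) hden2
    have hx : 2 * x = m1 + m2 := by
      have hsum : (m1 - m2) * (2 * x - m1 - m2) = 0 := by linear_combination -hOM
      rcases mul_eq_zero.mp hsum with h | h
      · exact absurd (sub_eq_zero.mp h) hm12
      · linarith
    have hy : 2 * (y * yA) = xA ^ 2 + yA ^ 2 - m1 ^ 2 + 2 * x * (m1 - xA) := by
      linear_combination -hOA
    have hAB : (p * m2 + l * m2 - l) ^ 2 * (4 * yA ^ 2) ≠ 0 :=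
      mul_ne_zero (pow_ne_zero _ hL) (by positivity)
    have hG : (p * m2 + l * m2 - l) ^ 2 * (4 * yA ^ 2) * Fplus xA yA c p l x y = 0 := by
      simp only [Fplus]
      rw [hc2]
      linear_combination
        (4*m2*yA^2*p*l^3 + -8*m2^2*yA^2*p*l^3 + -8*m2^2*yA^2*p^2*l^2 + 4*m2^3*yA^2*p*l^3 + 8*m2^3*yA^2*p^2*l^2 + 4*m2^3*yA^2*p^3*l + 4*m1*yA^2*l^4 + -4*m1*yA^2*p*l^3 + 4*m1*yA^2*p^2*l^2 + -12*m1*m2*yA^2*l^4 + -8*m1*m2*yA^2*p*l^3 + -4*m1*m2*yA^2*p^2*l^2 + -8*m1*m2*yA^2*p^3*l + 12*m1*m2^2*yA^2*l^4 + 28*m1*m2^2*yA^2*p*l^3 + 24*m1*m2^2*yA^2*p^2*l^2 + 12*m1*m2^2*yA^2*p^3*l + 4*m1*m2^2*yA^2*p^4 + -4*m1*m2^3*yA^2*l^4 + -16*m1*m2^3*yA^2*p*l^3 + -24*m1*m2^3*yA^2*p^2*l^2 + -16*m1*m2^3*yA^2*p^3*l + -4*m1*m2^3*yA^2*p^4 +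 4*m1^2*m2*yA^2*l^4 + 8*m1^2*m2*yA^2*p*l^3 + 4*m1^2*m2*yA^2*p^2*l^2 + -8*m1^2*m2^2*yA^2*l^4 + -24*m1^2*m2^2*yA^2*p*l^3 + -24*m1^2*m2^2*yA^2*p^2*l^2 + -8*m1^2*m2^2*yA^2*p^3*l + 4*m1^2*m2^3*yA^2*l^4 + 16*m1^2*m2^3*yA^2*p*l^3 + 24*m1^2*m2^3*yA^2*p^2*l^2 + 16*m1^2*m2^3*yA^2*p^3*l + 4*m1^2*m2^3*yA^2*p^4 + -4*m1^3*yA^2*l^4 + -8*m1^3*yA^2*p*l^3 + -4*m1^3*yA^2*p^2*l^2 + 8*m1^3*m2*yA^2*l^4 + 24*m1^3*m2*yA^2*p*l^3 + 24*m1^3*m2*yA^2*p^2*l^2 + 8*m1^3*m2*yA^2*p^3*l + -4*m1^3*m2^2*yA^2*l^4 + -16*m1^3*m2^2*yA^2*p*l^3 + -24*m1^3*m2^2*yA^2*p^2*l^2 + -16*m1^3*m2^2*yA^2*p^3*l + -4*m1^3*m2^2*yA^2*p^4 + 8*x*yA^2*p*l^3 + -16*x*m2*yA^2*p*l^3 +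 -16*x*m2*yA^2*p^2*l^2 + 8*x*m2^2*yA^2*p*l^3 + 16*x*m2^2*yA^2*p^2*l^2 + 8*x*m2^2*yA^2*p^3*l + -8*x*m1*yA^2*l^4 + -16*x*m1*yA^2*p*l^3 + -8*x*m1*yA^2*p^2*l^2 + 16*x*m1*m2*yA^2*l^4 + 48*x*m1*m2*yA^2*p*l^3 + 48*x*m1*m2*yA^2*p^2*l^2 + 16*x*m1*m2*yA^2*p^3*l + -8*x*m1*m2^2*yA^2*l^4 + -32*x*m1*m2^2*yA^2*p*l^3 + -48*x*m1*m2^2*yA^2*p^2*l^2 + -32*x*m1*m2^2*yA^2*p^3*l + -8*x*m1*m2^2*yA^2*p^4 + 8*x*m1^2*yA^2*l^4 + 16*x*m1^2*yA^2*p*l^3 + 8*x*m1^2*yA^2*p^2*l^2 + -16*x*m1^2*m2*yA^2*l^4 + -48*x*m1^2*m2*yA^2*p*l^3 + -48*x*m1^2*m2*yA^2*p^2*l^2 + -16*x*m1^2*m2*yA^2*p^3*l + 8*x*m1^2*m2^2*yA^2*l^4 + 32*x*m1^2*m2^2*yA^2*p*l^3 + 48*x*m1^2*m2^2*yA^2*p^2*l^2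 + 32*x*m1^2*m2^2*yA^2*p^3*l + 8*x*m1^2*m2^2*yA^2*p^4) * hx +
        (4*yA^2*l^4 + -8*yA^2*p*l^3 + 4*yA^2*p^2*l^2 + -4*yA^4*l^4 + -8*yA^4*p*l^3 + -4*yA^4*p^2*l^2 + -4*xA^2*yA^2*l^4 + -8*xA^2*yA^2*p*l^3 + -4*xA^2*yA^2*p^2*l^2 + -8*m2*yA^2*l^4 + 8*m2*yA^2*p*l^3 + 8*m2*yA^2*p^2*l^2 + -8*m2*yA^2*p^3*l + 8*m2*yA^4*l^4 + 24*m2*yA^4*p*l^3 + 24*m2*yA^4*p^2*l^2 + 8*m2*yA^4*p^3*l + 8*m2*xA^2*yA^2*l^4 + 24*m2*xA^2*yA^2*p*l^3 + 24*m2*xA^2*yA^2*p^2*l^2 + 8*m2*xA^2*yA^2*p^3*l + 4*m2^2*yA^2*l^4 + -8*m2^2*yA^2*p^2*l^2 + 4*m2^2*yA^2*p^4 + -4*m2^2*yA^4*l^4 + -16*m2^2*yA^4*p*l^3 + -24*m2^2*yA^4*p^2*l^2 + -16*m2^2*yA^4*p^3*l + -4*m2^2*yA^4*p^4 + -4*m2^2*xA^2*yA^2*l^4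 + -16*m2^2*xA^2*yA^2*p*l^3 + -24*m2^2*xA^2*yA^2*p^2*l^2 + -16*m2^2*xA^2*yA^2*p^3*l + -4*m2^2*xA^2*yA^2*p^4 + -4*m1^2*yA^2*l^4 + -8*m1^2*yA^2*p*l^3 + -4*m1^2*yA^2*p^2*l^2 + 8*m1^2*m2*yA^2*l^4 + 24*m1^2*m2*yA^2*p*l^3 + 24*m1^2*m2*yA^2*p^2*l^2 + 8*m1^2*m2*yA^2*p^3*l + -4*m1^2*m2^2*yA^2*l^4 + -16*m1^2*m2^2*yA^2*p*l^3 + -24*m1^2*m2^2*yA^2*p^2*l^2 + -16*m1^2*m2^2*yA^2*p^3*l + -4*m1^2*m2^2*yA^2*p^4 + 8*(y*yA)*yA^2*l^4 + 16*(y*yA)*yA^2*p*l^3 + 8*(y*yA)*yA^2*p^2*l^2 + -16*(y*yA)*m2*yA^2*l^4 + -48*(y*yA)*m2*yA^2*p*l^3 + -48*(y*yA)*m2*yA^2*p^2*l^2 + -16*(y*yA)*m2*yA^2*p^3*l + 8*(y*yA)*m2^2*yA^2*l^4 + 32*(y*yA)*m2^2*yA^2*p*l^3 + 48*(y*yA)*m2^2*yA^2*p^2*l^2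 + 32*(y*yA)*m2^2*yA^2*p^3*l + 8*(y*yA)*m2^2*yA^2*p^4 + -8*x*yA^2*l^4 + -16*x*yA^2*p*l^3 + -8*x*yA^2*p^2*l^2 + 8*x*xA*yA^2*l^4 + 16*x*xA*yA^2*p*l^3 + 8*x*xA*yA^2*p^2*l^2 + 16*x*m2*yA^2*l^4 + 48*x*m2*yA^2*p*l^3 + 48*x*m2*yA^2*p^2*l^2 + 16*x*m2*yA^2*p^3*l + -16*x*m2*xA*yA^2*l^4 + -48*x*m2*xA*yA^2*p*l^3 + -48*x*m2*xA*yA^2*p^2*l^2 + -16*x*m2*xA*yA^2*p^3*l + -8*x*m2^2*yA^2*l^4 + -32*x*m2^2*yA^2*p*l^3 + -48*x*m2^2*yA^2*p^2*l^2 + -32*x*m2^2*yA^2*p^3*l + -8*x*m2^2*yA^2*p^4 + 8*x*m2^2*xA*yA^2*l^4 + 32*x*m2^2*xA*yA^2*p*l^3 + 48*x*m2^2*xA*yA^2*p^2*l^2 + 32*x*m2^2*xA*yA^2*p^3*l + 8*x*m2^2*xA*yA^2*p^4 + 8*x*m1*yA^2*l^4 + 16*x*m1*yA^2*p*l^3 +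 8*x*m1*yA^2*p^2*l^2 + -16*x*m1*m2*yA^2*l^4 + -48*x*m1*m2*yA^2*p*l^3 + -48*x*m1*m2*yA^2*p^2*l^2 + -16*x*m1*m2*yA^2*p^3*l + 8*x*m1*m2^2*yA^2*l^4 + 32*x*m1*m2^2*yA^2*p*l^3 + 48*x*m1*m2^2*yA^2*p^2*l^2 + 32*x*m1*m2^2*yA^2*p^3*l + 8*x*m1*m2^2*yA^2*p^4) * hy +
        (-4*m2*yA^2*l^3 + 8*m2^2*yA^2*l^3 + 8*m2^2*yA^2*p*l^2 + -4*m2^3*yA^2*l^3 + -8*m2^3*yA^2*p*l^2 + -4*m2^3*yA^2*p^2*l + -4*m1*yA^2*p*l^2 + 4*m1*m2*yA^2*l^3 + 12*m1*m2*yA^2*p*l^2 + 8*m1*m2*yA^2*p^2*l + -8*m1*m2^2*yA^2*l^3 + -20*m1*m2^2*yA^2*p*l^2 + -16*m1*m2^2*yA^2*p^2*l + -4*m1*m2^2*yA^2*p^3 + 4*m1*m2^3*yA^2*l^3 + 12*m1*m2^3*yA^2*p*l^2 + 12*m1*m2^3*yA^2*p^2*l + 4*m1*m2^3*yA^2*p^3)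 * hR
    exact (mul_eq_zero.mp hG).resolve_left hAB
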